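/- Let G be a group with finite symmetric generating set X and let L = Geo(G,X). If w ∼_L w² for every nonempty word w over X, then every generator x ∈ X has only finitely many conjugates in G (equivalently, the centralizer of x has finite index in G), and hence the center Z(G) has finite index in G. -/

import Mathlib

/-- `pre_{k-1}`, `suf_{k-1}` and `sub_k` agree: the equivalence `∼_k` on words. -/
def SimK {A : Type*} (k : ℕ) (u v : List A) : Prop :=
  u.take (k - 1) = v.take (k - 1) ∧
  u.drop (u.length - (k - 1)) = v.drop (v.length - (k - 1)) ∧
  ∀ s : List A, s.length = k → (s <:+: u ↔ s <:+: v)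

/-- A language `L` is `k`-locally testable if membership is invariant under `∼_k`. -/
def LocallyTestable {A : Type*} (k : ℕ) (L : Set (List A)) : Prop :=
  ∀ u v : List A, SimK k u v → (u ∈ L ↔ v ∈ L)

/-- The syntactic congruence of a language: `u ∼_L v` iff `sut ∈ L ↔ svt ∈ L` for all `s, t`. -/
def SynCong {A : Type*} (L : Set (List A)) (u v : List A) : Prop :=
  ∀ s t : List A, s ++ u ++ t ∈ L ↔ s ++ v ++ t ∈ L

/-- The element of `G` represented by a word over the generating set `X`. -/
def wordProd {G : Type*} [Group G] {X : Set G} (w : List X) : G :=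
  (w.map Subtype.val).prod

/-- A word over `X` is geodesic if no word representing the same element is shorter. -/
def IsGeodesic {G : Type*} [Group G] (X : Set G) (w : List X) : Prop :=
  ∀ v : List X, wordProd v = wordProd w → w.length ≤ v.length

/-- The language of all geodesic words over `X`. -/
def Geo {G : Type*} [Group G] (X : Set G) : Set (List X) :=
  {w | IsGeodesic X w}

/-- The `j`-th power of a word in the free monoid (concatenation of `j` copies). -/
def listPow {A : Type*} (w : List A) : ℕ → List A
  | 0 => []
  | n + 1 => w ++ listPow w n

/-!
If `v` is a geodesic word with `v ∼ v²`, then every power `vᵏ` is geodesic, so the word length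
of `(wordProd v)ᵏ` is `k·|v|`. For a conjugate `y = g x g⁻¹` of a generator `x`, the words
`u xᵏ u'` (with `u`, `u'` spelling `g`, `g⁻¹`) show that `yᵏ` has length at most `k + C`.
Comparing the two for large `k` forces a geodesic for `y` to have length at most one, so every
conjugate of `x` lies in the finite set `X ∪ {1}`. Orbit–stabilizer turns this into finite index
of the centralizers of the generators, whose intersection is the center.
-/

lemma listPow_length {A : Type*} (w : List A) (k : ℕ) :
    (listPow w k).length = k * w.length := by
  induction k with
  | zero => simp [listPow]
  | succ n ih => rw [listPow, List.length_append, ih]; ring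

lemma listPow_succ_mem_of_synCong {A : Type*} {L : Set (List A)} {v : List A}
    (hv : SynCong L v (v ++ v)) (hmem : v ∈ L) (k : ℕ) : listPow v (k + 1) ∈ L := by
  induction k with
  | zero => simpa [listPow] using hmem
  | succ n ih => simpa [listPow] using (hv [] (listPow v n)).mp (by simpa [listPow] using ih)

lemma Subgroup.index_centralizer_singleton {G : Type*} [Group G] (x : G) :
    (Subgroup.centralizer {x}).index = {g : G | IsConj x g}.ncard := by
  rw [Subgroup.centralizer_eq_comap_stabilizer]
  refine (Subgroup.index_comap_of_surjective (H := MulAction.stabilizer (ConjAct G) x)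
    (f := ConjAct.toConjAct.toMonoidHom) ConjAct.toConjAct.surjective).trans ?_
  rw [MulAction.index_stabilizer]
  congr 1
  ext g
  exact ConjAct.mem_orbit_conjAct.trans isConj_comm

lemma Subgroup.finiteIndex_centralizer_singleton {G : Type*} [Group G] {x : G}
    (hx : {g : G | IsConj x g}.Finite) : (Subgroup.centralizer {x}).FiniteIndex := by
  rw [Subgroup.finiteIndex_iff, Subgroup.index_centralizer_singleton]
  exact (Set.ncard_pos hx).mpr ⟨x, IsConj.refl x⟩ |>.ne'

section WordMetric

variable {G : Type*} [Group G] {X : Set G}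

lemma wordProd_append (u v : List X) : wordProd (u ++ v) = wordProd u * wordProd v := by
  simp [wordProd]

lemma wordProd_listPow (w : List X) (k : ℕ) : wordProd (listPow w k) = wordProd w ^ k := by
  induction k with
  | zero => simp [listPow, wordProd]
  | succ n ih => rw [listPow, wordProd_append, ih, pow_succ']

lemma exists_wordProd_eq (hsym : ∀ x ∈ X, x⁻¹ ∈ X) (hgen : Subgroup.closure X = ⊤) (g : G) :
    ∃ w : List X, wordProd w = g := by
  have hX : X ∪ X⁻¹ = X := Set.union_eq_left.mpr fun x hx => by simpa using hsym x⁻¹ hx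
  have hg : g ∈ Submonoid.closure X := by
    rw [← hX, ← Subgroup.closure_toSubmonoid, hgen]
    trivial
  obtain ⟨l, hlX, rfl⟩ := Submonoid.exists_list_of_mem_closure hg
  exact ⟨l.pmap Subtype.mk hlX, by simp [wordProd, List.map_pmap]⟩

lemma exists_mem_geo_wordProd_eq (hsym : ∀ x ∈ X, x⁻¹ ∈ X) (hgen : Subgroup.closure X = ⊤)
    (g : G) : ∃ v ∈ Geo X, wordProd v = g := by
  have hne : {w : List X | wordProd w = g}.Nonempty := exists_wordProd_eq hsym hgen g
  refine ⟨Function.argminOn List.length _ hne, fun w hw => ?_, Function.argminOn_mem _ _ hne⟩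
  exact Function.argminOn_le List.length _ (hw.trans (Function.argminOn_mem _ _ hne))

lemma length_le_one_of_pow_le (hidem : ∀ w : List X, w ≠ [] → SynCong (Geo X) w (w ++ w))
    {v : List X} (hv : v ∈ Geo X) (c : ℕ)
    (hgrowth : ∀ k, ∃ w : List X, wordProd w = wordProd v ^ k ∧ w.length ≤ k + c) :
    v.length ≤ 1 := by
  rcases eq_or_ne v [] with rfl | hne
  · simp
  obtain ⟨w, hw, hwlen⟩ := hgrowth (c + 1)
  have hgeo := listPow_succ_mem_of_synCong (hidem v hne) hv c w
    (by rw [hw, wordProd_listPow])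
  rw [listPow_length] at hgeo
  nlinarith

lemma conj_pow_length_le (hsym : ∀ x ∈ X, x⁻¹ ∈ X) (hgen : Subgroup.closure X = ⊤)
    {x : G} (hx : x ∈ X) (g : G) : ∃ c, ∀ k, ∃ w : List X,
      wordProd w = (g * x * g⁻¹) ^ k ∧ w.length ≤ k + c := by
  obtain ⟨u, hu⟩ := exists_wordProd_eq hsym hgen g
  obtain ⟨u', hu'⟩ := exists_wordProd_eq hsym hgen g⁻¹
  refine ⟨u.length + u'.length, fun k => ⟨u ++ listPow [⟨x, hx⟩] k ++ u', ?_, ?_⟩⟩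
  · rw [wordProd_append, wordProd_append, wordProd_listPow, hu, hu', conj_pow]
    simp [wordProd]
  · simp only [List.length_append, listPow_length, List.length_singleton]
    omega

lemma setOf_isConj_subset_insert_one (hsym : ∀ x ∈ X, x⁻¹ ∈ X) (hgen : Subgroup.closure X = ⊤)
    (hidem : ∀ w : List X, w ≠ [] → SynCong (Geo X) w (w ++ w)) {x : G} (hx : x ∈ X) :
    {g : G | IsConj x g} ⊆ insert 1 X := by
  intro y hy
  obtain ⟨g, rfl⟩ := isConj_iff.mp hy
  obtain ⟨v, hv, hvg⟩ := exists_mem_geo_wordProd_eq hsym hgen (g * x * g⁻¹)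
  obtain ⟨c, hc⟩ := conj_pow_length_le hsym hgen hx g
  have hlen := length_le_one_of_pow_le hidem hv c (hvg ▸ hc)
  rw [← hvg]
  match v, hlen with
  | [], _ => exact Set.mem_insert _ _
  | [a], _ => simp [wordProd]

end WordMetric

/-- If the syntactic semigroup of `Geo(G,X)` is idempotent, then every generator
`x ∈ X` has finitely many conjugates (equivalently, its centralizer has finite index),
and hence the center of `G` has finite index. -/
theorem stmt15 {G : Type*} [Group G] (X : Set G)
    (hfin : X.Finite) (hsym : ∀ x ∈ X, x⁻¹ ∈ X) (hgen : Subgroup.closure X = ⊤)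
    (hidem : ∀ w : List X, w ≠ [] → SynCong (Geo X) w (w ++ w)) :
    (∀ x ∈ X, {g : G | IsConj x g}.Finite ∧
      (Subgroup.centralizer {x}).FiniteIndex) ∧
    (Subgroup.center G).FiniteIndex := by
  have hconj : ∀ x ∈ X, {g : G | IsConj x g}.Finite := fun x hx =>
    (hfin.insert 1).subset (setOf_isConj_subset_insert_one hsym hgen hidem hx)
  have hcent : ∀ x ∈ X, (Subgroup.centralizer {x}).FiniteIndex := fun x hx =>
    Subgroup.finiteIndex_centralizer_singleton (hconj x hx)
  refine ⟨fun x hx => ⟨hconj x hx, hcent x hx⟩, ?_⟩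
  have : Finite X := hfin.to_subtype
  rw [Subgroup.center_eq_infi' hgen]
  exact Subgroup.finiteIndex_iInf fun x => hcent x x.2
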